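/- arXiv:2401.03305 — 4 statements merged into one kernel-verified Lean document; each statement's English description precedes it below -/
import Mathlib

section
/- For all real κ > 0, T > 0, and t ∈ [0, T], the integral (κ / sinh(κT)) · ∫₀ᵀ sinh(κ·min(s,t)) · sinh(κ·(T − max(s,t))) ds equals (sinh(κT) − sinh(κt))/sinh(κT) − sinh(κ(T−t))/sinh(κT). -/
open Real intervalIntegral

theorem stmt_0 (κ T t : ℝ) (hκ : 0 < κ) (hT : 0 < T) (ht : t ∈ Set.Icc 0 T) :
    (κ / Real.sinh (κ * T)) *
      ∫ s in (0:ℝ)..T, Real.sinh (κ * min s t) * Real.sinh (κ * (T - max s t)) =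
    (Real.sinh (κ * T) - Real.sinh (κ * t)) / Real.sinh (κ * T)
      - Real.sinh (κ * (T - t)) / Real.sinh (κ * T) := by
  obtain ⟨ht0, htT⟩ := ht
  have hsT : Real.sinh (κ * T) ≠ 0 := ne_of_gt (Real.sinh_pos_iff.2 (by positivity))
  have hcont : Continuous fun s : ℝ => Real.sinh (κ * min s t) * Real.sinh (κ * (T - max s t)) := by
    fun_prop
  have hI1 : ∫ s in (0:ℝ)..t, Real.sinh (κ * s) = (Real.cosh (κ * t) - 1) / κ := by
    have : ∀ s ∈ Set.uIcc (0:ℝ) t, HasDerivAt (fun s => Real.cosh (κ * s) / κ)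
        (Real.sinh (κ * s)) s := by
      intro s _
      have h := (((hasDerivAt_id s).const_mul κ).cosh).div_const κ
      refine h.congr_deriv ?_
      field_simp
      rfl
    rw [intervalIntegral.integral_eq_sub_of_hasDerivAt this
      ((Real.continuous_sinh.comp (continuous_const.mul continuous_id)).intervalIntegrable 0 t)]
    simp [Real.cosh_zero]
    field_simp
  have hI2 : ∫ s in t..T, Real.sinh (κ * (T - s)) = (Real.cosh (κ * (T - t)) - 1) / κ := by
    have : ∀ s ∈ Set.uIcc t T, HasDerivAt (fun s => -(Real.cosh (κ * (T - s)) / κ))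
        (Real.sinh (κ * (T - s))) s := by
      intro s _
      have hin : HasDerivAt (fun s : ℝ => κ * (T - s)) (-κ) s := by
        have := ((hasDerivAt_id s).const_sub T).const_mul κ
        refine this.congr_deriv ?_; ring
      have h := ((hin.cosh).div_const κ).neg
      refine h.congr_deriv ?_
      field_simp
    rw [intervalIntegral.integral_eq_sub_of_hasDerivAt this
      ((Real.continuous_sinh.comp (continuous_const.mul (continuous_const.sub continuous_id))).intervalIntegrable t T)]
    simp [Real.cosh_zero]
    field_simp
    ring
  have hsplit : ∫ s in (0:ℝ)..T, Real.sinh (κ * min s t) * Real.sinh (κ * (T - max s t))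
      = Real.sinh (κ * (T - t)) * ((Real.cosh (κ * t) - 1) / κ)
        + Real.sinh (κ * t) * ((Real.cosh (κ * (T - t)) - 1) / κ) := by
    rw [← intervalIntegral.integral_add_adjacent_intervals (b := t)
      (hcont.intervalIntegrable 0 t) (hcont.intervalIntegrable t T)]
    have e1 : ∫ s in (0:ℝ)..t, Real.sinh (κ * min s t) * Real.sinh (κ * (T - max s t))
        = Real.sinh (κ * (T - t)) * ((Real.cosh (κ * t) - 1) / κ) := by
      rw [intervalIntegral.integral_congr (g := fun s => Real.sinh (κ * s) * Real.sinh (κ * (T - t)))]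
      · rw [intervalIntegral.integral_mul_const, hI1]; ring
      · intro s hs
        rw [Set.uIcc_of_le ht0] at hs
        simp only [min_eq_left hs.2, max_eq_right hs.2]
    have e2 : ∫ s in t..T, Real.sinh (κ * min s t) * Real.sinh (κ * (T - max s t))
        = Real.sinh (κ * t) * ((Real.cosh (κ * (T - t)) - 1) / κ) := by
      rw [intervalIntegral.integral_congr (g := fun s => Real.sinh (κ * t) * Real.sinh (κ * (T - s)))]
      · rw [intervalIntegral.integral_const_mul, hI2]
      · intro s hs
        rw [Set.uIcc_of_le htT] at hs
        simp only [min_eq_right hs.1, max_eq_left hs.1]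
    rw [e1, e2]
  rw [hsplit]
  have hT' : Real.sinh (κ * T) = Real.sinh (κ * (T - t)) * Real.cosh (κ * t)
      + Real.cosh (κ * (T - t)) * Real.sinh (κ * t) := by
    rw [← Real.sinh_add]; ring_nf
  field_simp
  rw [hT']
  ring
end

section
/- Let κ > 0, T > 0, x₀ > A, and define x_t := A + (R − A)·TC_t + (x₀ − R)·IS_t with IS_t = sinh(κ(T−t))/sinh(κT), TC_t = (sinh(κT) − sinh(κt))/sinh(κT). If R > x₀, then x is concave on [0, T] (its second derivative x_t'' = κ²[−(R−A)sinh(κt) + (x₀−R)sinh(κ(T−t))]/sinh(κT) is ≤ 0); if R < A, then x is convex on [0, T]. -/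
theorem stmt_8 (κ T x₀ A R : ℝ) (hκ : 0 < κ) (hT : 0 < T) (hA : A < x₀)
    (IS : ℝ → ℝ) (TC : ℝ → ℝ) (x : ℝ → ℝ)
    (hIS : ∀ t, IS t = Real.sinh (κ * (T - t)) / Real.sinh (κ * T))
    (hTC : ∀ t, TC t = (Real.sinh (κ * T) - Real.sinh (κ * t)) / Real.sinh (κ * T))
    (hx : ∀ t, x t = A + (R - A) * TC t + (x₀ - R) * IS t) :
    (R > x₀ → ConcaveOn ℝ (Set.Icc 0 T) x ∧
      ∀ t ∈ Set.Icc (0:ℝ) T,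
        deriv (deriv x) t = κ ^ 2 * (-(R - A) * Real.sinh (κ * t)
          + (x₀ - R) * Real.sinh (κ * (T - t))) / Real.sinh (κ * T) ∧
        deriv (deriv x) t ≤ 0) ∧
    (R < A → ConvexOn ℝ (Set.Icc 0 T) x) := by
  have hs : 0 < Real.sinh (κ * T) := Real.sinh_pos_iff.2 (by positivity)
  set s := Real.sinh (κ * T) with hsdef
  -- derivative lemmas for the building blocks
  have h1 : ∀ t : ℝ, HasDerivAt (fun u => Real.sinh (κ * u)) (κ * Real.cosh (κ * t)) t := by
    intro t
    have := (Real.hasDerivAt_sinh (κ * t)).comp t ((hasDerivAt_id t).const_mul κ)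
    simpa [mul_comm, Function.comp_def] using this
  have h1' : ∀ t : ℝ, HasDerivAt (fun u => Real.cosh (κ * u)) (κ * Real.sinh (κ * t)) t := by
    intro t
    have := (Real.hasDerivAt_cosh (κ * t)).comp t ((hasDerivAt_id t).const_mul κ)
    simpa [mul_comm, Function.comp_def] using this
  have h2 : ∀ t : ℝ, HasDerivAt (fun u => Real.sinh (κ * (T - u)))
      (-(κ * Real.cosh (κ * (T - t)))) t := by
    intro t
    have hin : HasDerivAt (fun u : ℝ => κ * (T - u)) (-κ) t := by
      simpa using ((hasDerivAt_const t T).sub (hasDerivAt_id t)).const_mul κ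
    have := (Real.hasDerivAt_sinh (κ * (T - t))).comp t hin
    simpa [mul_comm, Function.comp_def] using this
  have h2' : ∀ t : ℝ, HasDerivAt (fun u => Real.cosh (κ * (T - u)))
      (-(κ * Real.sinh (κ * (T - t)))) t := by
    intro t
    have hin : HasDerivAt (fun u : ℝ => κ * (T - u)) (-κ) t := by
      simpa using ((hasDerivAt_const t T).sub (hasDerivAt_id t)).const_mul κ
    have := (Real.hasDerivAt_cosh (κ * (T - t))).comp t hin
    simpa [mul_comm, Function.comp_def] using this
  -- first derivative of x
  have hd1 : ∀ t : ℝ, HasDerivAt x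
      ((-(R - A) * (κ * Real.cosh (κ * t)) - (x₀ - R) * (κ * Real.cosh (κ * (T - t)))) / s) t := by
    intro t
    have hxg : x = fun u => A + (R - A) * ((s - Real.sinh (κ * u)) / s)
        + (x₀ - R) * (Real.sinh (κ * (T - u)) / s) := by
      funext u; rw [hx, hTC, hIS]
    rw [hxg]
    have := ((((hasDerivAt_const t s).sub (h1 t)).div_const s).const_mul (R - A)).const_add A
      |>.add (((h2 t).div_const s).const_mul (x₀ - R))
    refine this.congr_deriv ?_
    ring
  have hderiv1 : deriv x = fun t =>
      (-(R - A) * (κ * Real.cosh (κ * t)) - (x₀ - R) * (κ * Real.cosh (κ * (T - t)))) / s := by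
    funext t; exact (hd1 t).deriv
  have hd2 : ∀ t : ℝ, HasDerivAt (deriv x)
      (κ ^ 2 * (-(R - A) * Real.sinh (κ * t) + (x₀ - R) * Real.sinh (κ * (T - t))) / s) t := by
    intro t
    rw [hderiv1]
    have := (((((h1' t).const_mul κ).const_mul (-(R - A))).sub
      (((h2' t).const_mul κ).const_mul (x₀ - R))).div_const s)
    refine this.congr_deriv ?_
    ring
  have hderiv2 : ∀ t : ℝ, deriv (deriv x) t
      = κ ^ 2 * (-(R - A) * Real.sinh (κ * t) + (x₀ - R) * Real.sinh (κ * (T - t))) / s :=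
    fun t => (hd2 t).deriv
  have hdiffx : Differentiable ℝ x := fun t => (hd1 t).differentiableAt
  have hdiffd : Differentiable ℝ (deriv x) := fun t => (hd2 t).differentiableAt
  have hIcc : Convex ℝ (Set.Icc (0:ℝ) T) := convex_Icc 0 T
  have hsign : ∀ t ∈ Set.Icc (0:ℝ) T,
      0 ≤ Real.sinh (κ * t) ∧ 0 ≤ Real.sinh (κ * (T - t)) := by
    rintro t ⟨ht0, htT⟩
    constructor
    · exact Real.sinh_nonneg_iff.2 (by positivity)
    · exact Real.sinh_nonneg_iff.2 (by nlinarith)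
  constructor
  · intro hR
    have hnum : ∀ t ∈ Set.Icc (0:ℝ) T, deriv (deriv x) t ≤ 0 := by
      intro t ht
      obtain ⟨hp, hq⟩ := hsign t ht
      rw [hderiv2]
      apply div_nonpos_of_nonpos_of_nonneg _ hs.le
      have ha : 0 < R - A := by linarith
      have hb : x₀ - R < 0 := by linarith
      nlinarith [mul_nonneg ha.le hp, mul_nonpos_of_nonpos_of_nonneg hb.le hq, sq_nonneg κ,
        mul_nonneg (mul_nonneg (sq_nonneg κ) ha.le) hp,
        mul_nonneg (sq_nonneg κ) (mul_nonneg (neg_nonneg.2 hb.le) hq)]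
    refine ⟨?_, fun t ht => ⟨hderiv2 t, hnum t ht⟩⟩
    apply concaveOn_of_deriv2_nonpos hIcc hdiffx.continuous.continuousOn
      (hdiffx.differentiableOn) (hdiffd.differentiableOn)
    intro t ht
    have := hnum t (interior_subset ht)
    simpa [Function.iterate_succ, Function.comp] using this
  · intro hR
    apply convexOn_of_deriv2_nonneg hIcc hdiffx.continuous.continuousOn
      (hdiffx.differentiableOn) (hdiffd.differentiableOn)
    intro t ht
    obtain ⟨hp, hq⟩ := hsign t (interior_subset ht)
    have h2d : 0 ≤ deriv (deriv x) t := by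
      rw [hderiv2]
      apply div_nonneg _ hs.le
      have ha : R - A < 0 := by linarith
      have hb : 0 < x₀ - R := by linarith
      nlinarith [mul_nonneg (mul_nonneg (sq_nonneg κ) (neg_nonneg.2 ha.le)) hp,
        mul_nonneg (mul_nonneg (sq_nonneg κ) hb.le) hq]
    simpa [Function.iterate_succ, Function.comp] using h2d
end

section
/- Let κ > 0, T > 0, x₀ > A, and x_t := A + (R − A)·TC_t + (x₀ − R)·IS_t as above with R > x₀. Then the minimum over t ∈ [0, T] of v_t := −x_t' is attained at t = 0 and equals (κ/sinh(κT))·[(1 − cosh(κT))·R + (x₀·cosh(κT) − A)]. Consequently v_t < 0 for some t ∈ [0, T] if and only if R > x₀ + (x₀ − A)/(cosh(κT) − 1). -/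
theorem stmt_9 (κ T x₀ A R : ℝ) (hκ : 0 < κ) (hT : 0 < T) (hA : A < x₀)
    (hR : x₀ < R)
    (IS : ℝ → ℝ) (TC : ℝ → ℝ) (x : ℝ → ℝ) (v : ℝ → ℝ)
    (hIS : ∀ t, IS t = Real.sinh (κ * (T - t)) / Real.sinh (κ * T))
    (hTC : ∀ t, TC t = (Real.sinh (κ * T) - Real.sinh (κ * t)) / Real.sinh (κ * T))
    (hx : ∀ t, x t = A + (R - A) * TC t + (x₀ - R) * IS t)
    (hv : ∀ t, v t = -deriv x t) :
    (∀ t ∈ Set.Icc (0:ℝ) T, v 0 ≤ v t) ∧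
    v 0 = (κ / Real.sinh (κ * T)) *
      ((1 - Real.cosh (κ * T)) * R + (x₀ * Real.cosh (κ * T) - A)) ∧
    ((∃ t ∈ Set.Icc (0:ℝ) T, v t < 0) ↔
      R > x₀ + (x₀ - A) / (Real.cosh (κ * T) - 1)) := by
  have hS : 0 < Real.sinh (κ * T) := Real.sinh_pos_iff.2 (mul_pos hκ hT)
  have hc1 : 1 < Real.cosh (κ * T) :=
    Real.one_lt_cosh.2 (ne_of_gt (mul_pos hκ hT))
  have hx' : x = fun t => A + (R - A) *
      ((Real.sinh (κ * T) - Real.sinh (κ * t)) / Real.sinh (κ * T)) +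
      (x₀ - R) * (Real.sinh (κ * (T - t)) / Real.sinh (κ * T)) :=
    funext fun t => by rw [hx, hTC, hIS]
  have key : ∀ t : ℝ, HasDerivAt x
      (((R - A) * (-(κ * Real.cosh (κ * t))) +
        (x₀ - R) * (-(κ * Real.cosh (κ * (T - t))))) / Real.sinh (κ * T)) t := by
    intro t
    rw [hx']
    have h1 : HasDerivAt (fun t : ℝ => Real.sinh (κ * t)) (κ * Real.cosh (κ * t)) t := by
      have := (Real.hasDerivAt_sinh (κ * t)).comp t ((hasDerivAt_id t).const_mul κ)
      simpa [mul_comm, Function.comp_def] using this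
    have h2 : HasDerivAt (fun t : ℝ => Real.sinh (κ * (T - t)))
        (-(κ * Real.cosh (κ * (T - t)))) t := by
      have hi : HasDerivAt (fun t : ℝ => κ * (T - t)) (-κ) t := by
        have := ((hasDerivAt_id t).const_sub T).const_mul κ
        simpa using this
      have := (Real.hasDerivAt_sinh (κ * (T - t))).comp t hi
      simpa [mul_comm, Function.comp_def] using this
    have := ((((h1.const_sub (Real.sinh (κ * T))).div_const (Real.sinh (κ * T))).const_mul
        (R - A)).const_add A).add
        ((h2.div_const (Real.sinh (κ * T))).const_mul (x₀ - R))
    refine this.congr_deriv ?_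
    ring
  have hv' : ∀ t, v t = κ * ((R - A) * Real.cosh (κ * t) +
      (x₀ - R) * Real.cosh (κ * (T - t))) / Real.sinh (κ * T) := by
    intro t
    rw [hv, (key t).deriv]
    ring
  have hmin : ∀ t ∈ Set.Icc (0:ℝ) T, v 0 ≤ v t := by
    intro t ht
    obtain ⟨ht0, htT⟩ := ht
    rw [hv', hv']
    rw [div_le_div_iff_of_pos_right hS]
    have hcosh1 : 1 ≤ Real.cosh (κ * t) := Real.one_le_cosh _
    have hcosh2 : Real.cosh (κ * (T - t)) ≤ Real.cosh (κ * T) := by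
      rw [Real.cosh_le_cosh, abs_of_nonneg (by nlinarith : (0:ℝ) ≤ κ * (T - t)),
        abs_of_nonneg (by positivity)]
      nlinarith
    simp only [mul_zero, Real.cosh_zero, sub_zero]
    nlinarith [mul_nonneg (by linarith : (0:ℝ) ≤ R - A) (by linarith : (0:ℝ) ≤ Real.cosh (κ * t) - 1),
      mul_nonneg (by linarith : (0:ℝ) ≤ R - x₀)
        (by linarith : (0:ℝ) ≤ Real.cosh (κ * T) - Real.cosh (κ * (T - t)))]
  have hv0 : v 0 = (κ / Real.sinh (κ * T)) *
      ((1 - Real.cosh (κ * T)) * R + (x₀ * Real.cosh (κ * T) - A)) := by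
    rw [hv']
    simp only [mul_zero, Real.cosh_zero, sub_zero]
    ring
  refine ⟨hmin, hv0, ?_, ?_⟩
  · rintro ⟨t, ht, hvt⟩
    have h0 : v 0 < 0 := lt_of_le_of_lt (hmin t ht) hvt
    rw [hv0] at h0
    have hpos : 0 < κ / Real.sinh (κ * T) := div_pos hκ hS
    have hnum : (1 - Real.cosh (κ * T)) * R + (x₀ * Real.cosh (κ * T) - A) < 0 := by
      nlinarith
    have : (x₀ - A) / (Real.cosh (κ * T) - 1) < R - x₀ := by
      rw [div_lt_iff₀ (by linarith : 0 < Real.cosh (κ * T) - 1)]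
      nlinarith
    linarith
  · intro hR'
    refine ⟨0, ⟨le_refl _, le_of_lt hT⟩, ?_⟩
    rw [hv0]
    have hpos : 0 < κ / Real.sinh (κ * T) := div_pos hκ hS
    have h2 : (x₀ - A) / (Real.cosh (κ * T) - 1) < R - x₀ := by linarith
    rw [div_lt_iff₀ (by linarith : 0 < Real.cosh (κ * T) - 1)] at h2
    have hnum : (1 - Real.cosh (κ * T)) * R + (x₀ * Real.cosh (κ * T) - A) < 0 := by nlinarith
    nlinarith
end

section
/- Let κ > 0, T > 0, and let R, R̃ : [0, T] → ℝ be measurable functions with ∫₀ᵀ (R_s − R̃_s)² ds < ε for some ε > 0. Define for t ∈ [0,T]: x_t := (κ/sinh(κT)) ∫₀ᵀ R_s·sinh(κ·min(s,t))·sinh(κ(T − max(s,t))) ds + B_t and x̃_t the same with R̃ in place of R (B_t any common boundary term independent of the reference strategy). Then |x_t − x̃_t| < (1/2)·√(κε) for every t ∈ [0, T]. -/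
open MeasureTheory

-- Cauchy–Schwarz for real integrals
lemma cs_integral {μ : Measure ℝ} {f g : ℝ → ℝ} (hf : MemLp f 2 μ) (hg : MemLp g 2 μ) :
    |∫ s, f s * g s ∂μ| ≤ Real.sqrt (∫ s, f s ^ 2 ∂μ) * Real.sqrt (∫ s, g s ^ 2 ∂μ) := by
  have h2 : Real.HolderConjugate 2 2 := Real.HolderConjugate.two_two
  have hf2 : MemLp f (ENNReal.ofReal 2) μ := by simpa [ENNReal.ofReal_ofNat] using hf
  have hg2 : MemLp g (ENNReal.ofReal 2) μ := by simpa [ENNReal.ofReal_ofNat] using hg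
  have H := MeasureTheory.integral_mul_norm_le_Lp_mul_Lq h2 hf2 hg2
  have habs : |∫ s, f s * g s ∂μ| ≤ ∫ s, ‖f s‖ * ‖g s‖ ∂μ := by
    calc |∫ s, f s * g s ∂μ| ≤ ∫ s, ‖f s * g s‖ ∂μ := by
          simpa using norm_integral_le_integral_norm (fun s => f s * g s)
      _ = ∫ s, ‖f s‖ * ‖g s‖ ∂μ := by simp [norm_mul]
  have e1 : (∫ s, ‖f s‖ ^ (2:ℝ) ∂μ) = ∫ s, f s ^ 2 ∂μ := by
    congr 1; funext s
    rw [show ((2:ℝ)) = ((2:ℕ):ℝ) by norm_num, Real.rpow_natCast]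
    simp [sq_abs]
  have e2 : (∫ s, ‖g s‖ ^ (2:ℝ) ∂μ) = ∫ s, g s ^ 2 ∂μ := by
    congr 1; funext s
    rw [show ((2:ℝ)) = ((2:ℕ):ℝ) by norm_num, Real.rpow_natCast]
    simp [sq_abs]
  rw [e1, e2] at H
  calc |∫ s, f s * g s ∂μ| ≤ ∫ s, ‖f s‖ * ‖g s‖ ∂μ := habs
    _ ≤ (∫ s, f s ^ 2 ∂μ) ^ ((1:ℝ)/2) * (∫ s, g s ^ 2 ∂μ) ^ ((1:ℝ)/2) := H
    _ = Real.sqrt (∫ s, f s ^ 2 ∂μ) * Real.sqrt (∫ s, g s ^ 2 ∂μ) := by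
        rw [Real.sqrt_eq_rpow, Real.sqrt_eq_rpow]

lemma sinh_sq_integral (κ : ℝ) (hκ : 0 < κ) (u : ℝ) :
    ∫ s in (0:ℝ)..u, Real.sinh (κ * s) ^ 2
      = (Real.sinh (κ*u) * Real.cosh (κ*u) - κ*u) / (2*κ) := by
  have hderiv : ∀ s ∈ Set.uIcc (0:ℝ) u,
      HasDerivAt (fun s => (Real.sinh (κ*s) * Real.cosh (κ*s) - κ*s) / (2*κ))
        (Real.sinh (κ*s) ^ 2) s := by
    intro s _
    have hs : HasDerivAt (fun s : ℝ => κ * s) κ s := by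
      simpa using (hasDerivAt_id s).const_mul κ
    have h1 : HasDerivAt (fun s => Real.sinh (κ*s)) (Real.cosh (κ*s) * κ) s := hs.sinh
    have h2 : HasDerivAt (fun s => Real.cosh (κ*s)) (Real.sinh (κ*s) * κ) s := hs.cosh
    have h3 := ((h1.mul h2).sub hs).div_const (2*κ)
    refine h3.congr_deriv ?_
    have hc : Real.cosh (κ*s) ^ 2 = Real.sinh (κ*s) ^2 + 1 := Real.cosh_sq _
    field_simp
    ring_nf
    nlinarith [hc]
  have hcont : IntervalIntegrable (fun s => Real.sinh (κ*s) ^ 2) volume 0 u :=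
    (Continuous.intervalIntegrable (by continuity) 0 u)
  have := intervalIntegral.integral_eq_sub_of_hasDerivAt hderiv hcont
  rw [this]; simp

lemma key_ineq (a b : ℝ) (ha : 0 ≤ a) (hb : 0 ≤ b) :
    Real.sinh b ^ 2 * (Real.sinh a * Real.cosh a - a)
      + Real.sinh a ^ 2 * (Real.sinh b * Real.cosh b - b)
      ≤ Real.sinh (a+b) ^ 2 / 2 := by
  have hadd : Real.sinh (a+b) = Real.sinh a * Real.cosh b + Real.cosh a * Real.sinh b :=
    Real.sinh_add a b
  have hcadd : Real.cosh (a+b) = Real.cosh a * Real.cosh b + Real.sinh a * Real.sinh b :=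
    Real.cosh_add a b
  have hcsub : Real.cosh (a-b) = Real.cosh a * Real.cosh b - Real.sinh a * Real.sinh b :=
    Real.cosh_sub a b
  have h1 : (1:ℝ) ≤ Real.cosh (a-b) := Real.one_le_cosh _
  have hes : Real.cosh (a+b) - Real.sinh (a+b) = Real.exp (-(a+b)) := Real.cosh_sub_sinh _
  have he1 : Real.exp (-(a+b)) ≤ 1 := Real.exp_le_one_iff.2 (by linarith)
  have hsa : 0 ≤ Real.sinh a := Real.sinh_nonneg_iff.2 ha
  have hsb : 0 ≤ Real.sinh b := Real.sinh_nonneg_iff.2 hb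
  have hsL : 0 ≤ Real.sinh (a+b) := Real.sinh_nonneg_iff.2 (by linarith)
  -- sinh a sinh b ≤ sinh(a+b)/2
  have hprod : Real.sinh a * Real.sinh b ≤ Real.sinh (a+b) / 2 := by nlinarith
  -- drop linear terms
  have hdrop : Real.sinh b ^ 2 * (Real.sinh a * Real.cosh a - a)
      + Real.sinh a ^ 2 * (Real.sinh b * Real.cosh b - b)
      ≤ Real.sinh a * Real.sinh b * Real.sinh (a+b) := by nlinarith [sq_nonneg (Real.sinh a), sq_nonneg (Real.sinh b)]
  nlinarith [mul_le_mul_of_nonneg_right hprod hsL]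

theorem stmt_12 (κ T ε : ℝ) (hκ : 0 < κ) (hT : 0 < T) (hε : 0 < ε)
    (R R' B : ℝ → ℝ) (hR : Measurable R) (hR' : Measurable R')
    (hint : IntervalIntegrable (fun s => (R s - R' s) ^ 2) MeasureTheory.volume 0 T)
    (hclose : ∫ s in (0:ℝ)..T, (R s - R' s) ^ 2 < ε)
    (x x' : ℝ → ℝ)
    (hx : ∀ t, x t = (κ / Real.sinh (κ * T)) *
      (∫ s in (0:ℝ)..T, R s * (Real.sinh (κ * min s t) * Real.sinh (κ * (T - max s t))))
      + B t)
    (hx' : ∀ t, x' t = (κ / Real.sinh (κ * T)) *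
      (∫ s in (0:ℝ)..T, R' s * (Real.sinh (κ * min s t) * Real.sinh (κ * (T - max s t))))
      + B t) :
    ∀ t ∈ Set.Icc (0:ℝ) T, |x t - x' t| < (1 / 2) * Real.sqrt (κ * ε) := by
  intro t ht
  obtain ⟨ht0, htT⟩ := ht
  have hRHS : 0 < (1 / 2) * Real.sqrt (κ * ε) := by
    have := Real.sqrt_pos.2 (mul_pos hκ hε); linarith
  set f : ℝ → ℝ := fun s => R s - R' s with hf_def
  set g : ℝ → ℝ := fun s => Real.sinh (κ * min s t) * Real.sinh (κ * (T - max s t)) with hg_def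
  set C : ℝ := κ / Real.sinh (κ * T) with hC_def
  have hsL : 0 < Real.sinh (κ * T) := Real.sinh_pos_iff.2 (mul_pos hκ hT)
  have hC : 0 < C := div_pos hκ hsL
  have hgcont : Continuous g := by
    apply Continuous.mul
    · exact Real.continuous_sinh.comp (continuous_const.mul (continuous_id.min continuous_const))
    · exact Real.continuous_sinh.comp
        (continuous_const.mul (continuous_const.sub (continuous_id.max continuous_const)))
  have hclose' : (∫ s in (0:ℝ)..T, f s ^ 2) < ε := hclose
  have hint' : IntervalIntegrable (fun s => f s ^ 2) MeasureTheory.volume 0 T := hint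
  have hfmeas' : Measurable f := hR.sub hR'
  have hxg : x t = C * (∫ s in (0:ℝ)..T, R s * g s) + B t := hx t
  have hx'g : x' t = C * (∫ s in (0:ℝ)..T, R' s * g s) + B t := hx' t
  clear_value f g C
  clear hx hx' hint hclose
  set μ : Measure ℝ := volume.restrict (Set.Ioc (0:ℝ) T) with hμ_def
  have hf2 : Integrable (fun s => f s ^ 2) μ :=
    (intervalIntegrable_iff_integrableOn_Ioc_of_le hT.le).1 hint'
  have hg2 : Integrable (fun s => g s ^ 2) μ :=
    (intervalIntegrable_iff_integrableOn_Ioc_of_le hT.le).1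
      ((hgcont.pow 2).intervalIntegrable 0 T)
  have hfmeas : AEStronglyMeasurable f μ := hfmeas'.aestronglyMeasurable
  have hfL2 : MemLp f 2 μ := (memLp_two_iff_integrable_sq hfmeas).2 hf2
  have hgL2 : MemLp g 2 μ := (memLp_two_iff_integrable_sq hgcont.aestronglyMeasurable).2 hg2
  have hfgInt : Integrable (fun s => f s * g s) μ := by
    refine Integrable.mono' ((hf2.add hg2).div_const 2)
      (hfmeas.mul hgcont.aestronglyMeasurable) ?_
    filter_upwards with s
    have h2ab := two_mul_le_add_sq (|f s|) (|g s|)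
    rw [sq_abs, sq_abs] at h2ab
    simp only [Pi.add_apply]
    rw [Real.norm_eq_abs, abs_mul]
    nlinarith [abs_nonneg (f s), abs_nonneg (g s)]
  have hfgI : IntervalIntegrable (fun s => f s * g s) volume 0 T :=
    (intervalIntegrable_iff_integrableOn_Ioc_of_le hT.le).2 hfgInt
  by_cases hRg : IntervalIntegrable (fun s => R s * g s) volume 0 T
  · -- integrable case
    have hR'g : IntervalIntegrable (fun s => R' s * g s) volume 0 T := by
      have he : (fun s => R' s * g s) = fun s => R s * g s - f s * g s := by
        funext s; simp only [hf_def]; ring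
      rw [he]; exact hRg.sub hfgI
    have hsub : (∫ s in (0:ℝ)..T, R s * g s) - (∫ s in (0:ℝ)..T, R' s * g s)
        = ∫ s in (0:ℝ)..T, f s * g s := by
      rw [← intervalIntegral.integral_sub hRg hR'g]
      congr 1; funext s; simp only [hf_def]; ring
    have hdiff : x t - x' t = C * ∫ s in (0:ℝ)..T, f s * g s := by
      rw [hxg, hx'g, ← hsub]; ring
    -- integrals and their (non)negativity
    set I : ℝ := ∫ s in (0:ℝ)..T, f s * g s with hI_def
    set F2 : ℝ := ∫ s in (0:ℝ)..T, f s ^ 2 with hF2_def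
    set G2 : ℝ := ∫ s in (0:ℝ)..T, g s ^ 2 with hG2_def
    have hF2nn : 0 ≤ F2 := intervalIntegral.integral_nonneg hT.le (fun s _ => sq_nonneg _)
    have hG2nn : 0 ≤ G2 := intervalIntegral.integral_nonneg hT.le (fun s _ => sq_nonneg _)
    have hF2lt : F2 < ε := hclose'
    -- Cauchy–Schwarz
    have hCS : |I| ≤ Real.sqrt F2 * Real.sqrt G2 := by
      have hIe : I = ∫ s, f s * g s ∂μ := intervalIntegral.integral_of_le hT.le
      have hFe : F2 = ∫ s, f s ^ 2 ∂μ := intervalIntegral.integral_of_le hT.le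
      have hGe : G2 = ∫ s, g s ^ 2 ∂μ := intervalIntegral.integral_of_le hT.le
      rw [hIe, hFe, hGe]
      exact cs_integral hfL2 hgL2
    -- compute G2
    have hint1 : IntervalIntegrable (fun s => g s ^ 2) volume 0 t :=
      (hgcont.pow 2).intervalIntegrable 0 t
    have hint2 : IntervalIntegrable (fun s => g s ^ 2) volume t T :=
      (hgcont.pow 2).intervalIntegrable t T
    have hsplit : G2 = (∫ s in (0:ℝ)..t, g s ^ 2) + ∫ s in t..T, g s ^ 2 :=
      (intervalIntegral.integral_add_adjacent_intervals hint1 hint2).symm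
    have e1 : (∫ s in (0:ℝ)..t, g s ^ 2)
        = Real.sinh (κ * (T - t)) ^ 2 * ∫ s in (0:ℝ)..t, Real.sinh (κ * s) ^ 2 := by
      rw [← intervalIntegral.integral_const_mul]
      apply intervalIntegral.integral_congr
      intro s hs
      rw [Set.uIcc_of_le ht0] at hs
      simp only [hg_def, min_eq_left hs.2, max_eq_right hs.2]
      ring
    have e2 : (∫ s in t..T, g s ^ 2)
        = Real.sinh (κ * t) ^ 2 * ∫ s in t..T, Real.sinh (κ * (T - s)) ^ 2 := by
      rw [← intervalIntegral.integral_const_mul]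
      apply intervalIntegral.integral_congr
      intro s hs
      rw [Set.uIcc_of_le htT] at hs
      simp only [hg_def, min_eq_right hs.1, max_eq_left hs.1]
      ring
    have e3 : (∫ s in t..T, Real.sinh (κ * (T - s)) ^ 2)
        = ∫ u in (0:ℝ)..(T - t), Real.sinh (κ * u) ^ 2 := by
      have := intervalIntegral.integral_comp_sub_left (a := t) (b := T)
        (fun u => Real.sinh (κ * u) ^ 2) T
      simpa using this
    have hG2eq : G2 = Real.sinh (κ * (T - t)) ^ 2
          * ((Real.sinh (κ * t) * Real.cosh (κ * t) - κ * t) / (2 * κ))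
        + Real.sinh (κ * t) ^ 2
          * ((Real.sinh (κ * (T - t)) * Real.cosh (κ * (T - t)) - κ * (T - t)) / (2 * κ)) := by
      rw [hsplit, e1, e2, e3, sinh_sq_integral κ hκ t, sinh_sq_integral κ hκ (T - t)]
    have hkey := key_ineq (κ * t) (κ * (T - t)) (mul_nonneg hκ.le ht0)
      (mul_nonneg hκ.le (by linarith))
    have hab : κ * t + κ * (T - t) = κ * T := by ring
    rw [hab] at hkey
    have hG2le : G2 ≤ Real.sinh (κ * T) ^ 2 / (4 * κ) := by
      rw [hG2eq]
      have h2κ : (0:ℝ) < 2 * κ := by linarith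
      calc Real.sinh (κ * (T - t)) ^ 2
            * ((Real.sinh (κ * t) * Real.cosh (κ * t) - κ * t) / (2 * κ))
          + Real.sinh (κ * t) ^ 2
            * ((Real.sinh (κ * (T - t)) * Real.cosh (κ * (T - t)) - κ * (T - t)) / (2 * κ))
          = (Real.sinh (κ * (T - t)) ^ 2 * (Real.sinh (κ * t) * Real.cosh (κ * t) - κ * t)
            + Real.sinh (κ * t) ^ 2
              * (Real.sinh (κ * (T - t)) * Real.cosh (κ * (T - t)) - κ * (T - t))) / (2 * κ) := by
            ring
        _ ≤ (Real.sinh (κ * T) ^ 2 / 2) / (2 * κ) := by gcongr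
        _ = Real.sinh (κ * T) ^ 2 / (4 * κ) := by ring
    have hCG : C ^ 2 * G2 ≤ κ / 4 := by
      have h1 : C ^ 2 * G2 ≤ C ^ 2 * (Real.sinh (κ * T) ^ 2 / (4 * κ)) :=
        mul_le_mul_of_nonneg_left hG2le (sq_nonneg C)
      have h2 : C ^ 2 * (Real.sinh (κ * T) ^ 2 / (4 * κ)) = κ / 4 := by
        rw [hC_def]; field_simp
      linarith
    -- final estimate
    have hsqC : Real.sqrt (C ^ 2 * G2) = C * Real.sqrt G2 := by
      rw [Real.sqrt_mul (sq_nonneg C), Real.sqrt_sq hC.le]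
    have habs : |x t - x' t| ≤ Real.sqrt F2 * Real.sqrt (C ^ 2 * G2) := by
      rw [hdiff, abs_mul, abs_of_pos hC, hsqC]
      calc C * |I| ≤ C * (Real.sqrt F2 * Real.sqrt G2) :=
            mul_le_mul_of_nonneg_left hCS hC.le
        _ = Real.sqrt F2 * (C * Real.sqrt G2) := by ring
    have hsqle : Real.sqrt (C ^ 2 * G2) ≤ Real.sqrt κ / 2 := by
      have h4 : Real.sqrt (κ / 4) = Real.sqrt κ / 2 := by
        rw [Real.sqrt_div hκ.le 4, show (4:ℝ) = 2 ^ 2 by norm_num, Real.sqrt_sq (by norm_num)]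
      calc Real.sqrt (C ^ 2 * G2) ≤ Real.sqrt (κ / 4) := Real.sqrt_le_sqrt hCG
        _ = Real.sqrt κ / 2 := h4
    have hFlt : Real.sqrt F2 < Real.sqrt ε := Real.sqrt_lt_sqrt hF2nn hF2lt
    have hκ2 : 0 < Real.sqrt κ / 2 := by
      have := Real.sqrt_pos.2 hκ; linarith
    calc |x t - x' t| ≤ Real.sqrt F2 * Real.sqrt (C ^ 2 * G2) := habs
      _ ≤ Real.sqrt F2 * (Real.sqrt κ / 2) :=
          mul_le_mul_of_nonneg_left hsqle (Real.sqrt_nonneg _)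
      _ < Real.sqrt ε * (Real.sqrt κ / 2) := mul_lt_mul_of_pos_right hFlt hκ2
      _ = (1 / 2) * Real.sqrt (κ * ε) := by rw [Real.sqrt_mul hκ.le]; ring
  · -- non-integrable case
    have hR'g : ¬ IntervalIntegrable (fun s => R' s * g s) volume 0 T := by
      intro h
      apply hRg
      have he : (fun s => R s * g s) = fun s => R' s * g s + f s * g s := by
        funext s; simp only [hf_def]; ring
      rw [he]; exact h.add hfgI
    rw [hxg, hx'g, intervalIntegral.integral_undef hRg, intervalIntegral.integral_undef hR'g]
    simpa using hRHS
end
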